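/- Let z_1,...,z_n be independent Bernoulli random variables with parameters q_1,...,q_n, λ = Σ q_i ≥ 1, and ℓ a positive integer. Then min(λ, ℓ) - E[min(Σ z_i, ℓ)] ≤ (3/√λ) · min(λ, ℓ). -/

import Mathlib

open Finset Real

/-- Probability of the outcome `z` of `n` independent Bernoulli random variables with
parameters `q i`. -/
noncomputable def berWeight {n : ℕ} (q : Fin n → ℝ) (z : Fin n → Bool) : ℝ :=
  ∏ i, if z i then q i else 1 - q i

/-- Number of successes in outcome `z`. -/
def count {n : ℕ} (z : Fin n → Bool) : ℕ := ∑ i, if z i then 1 else 0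

/-- `Hber q ℓ = E[min(Σᵢ zᵢ, ℓ)]` for independent `zᵢ ~ Ber(q i)`. -/
noncomputable def Hber {n : ℕ} (q : Fin n → ℝ) (ℓ : ℕ) : ℝ :=
  ∑ z : Fin n → Bool, berWeight q z * min ((count z : ℝ)) (ℓ : ℝ)

/-- `Ptail q m = P[Σᵢ zᵢ ≥ m]` for independent `zᵢ ~ Ber(q i)`. -/
noncomputable def Ptail {n : ℕ} (q : Fin n → ℝ) (m : ℕ) : ℝ :=
  ∑ z ∈ Finset.univ.filter (fun z : Fin n → Bool => m ≤ count z), berWeight q z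

/-!
The gap `min λ ℓ - E[min(X, ℓ)]`, with `X = Σ zᵢ`, is controlled by the variance
`Var X = Σ qᵢ (1 - qᵢ) ≤ λ` in two regimes. If `λ ≤ 3ℓ`, the map `x ↦ min x ℓ` is
1-Lipschitz, so the gap is at most `E|X - λ| ≤ √λ ≤ 3 min(λ, ℓ) / √λ`. If `λ > 3ℓ`, the gap is
`E[(ℓ - X)⁺] ≤ ℓ · P(X < ℓ) ≤ ℓ λ / (λ - ℓ)²` by Chebyshev, and `λ - ℓ > 2λ/3` makes this at
most `3ℓ / √λ`.
-/

lemma Finset.sum_mul_le_sqrt_sum_mul_sq {ι : Type*} (s : Finset ι) {w : ι → ℝ}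
    (hw : ∀ i ∈ s, 0 ≤ w i) (hw1 : ∑ i ∈ s, w i = 1) (g : ι → ℝ) :
    ∑ i ∈ s, w i * g i ≤ √(∑ i ∈ s, w i * g i ^ 2) := by
  have jensen := (even_two.convexOn_pow (𝕜 := ℝ)).map_sum_le hw hw1 (p := g) (by simp)
  simp only [smul_eq_mul] at jensen
  exact (le_abs_self _).trans (Real.abs_le_sqrt jensen)

section Bernoulli

variable {n : ℕ} (q : Fin n → ℝ)

lemma berWeight_nonneg (hq : ∀ i, q i ∈ Set.Icc (0 : ℝ) 1) (z : Fin n → Bool) :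
    0 ≤ berWeight q z :=
  prod_nonneg fun i _ => by cases z i <;> simp [(hq i).1, (hq i).2]

lemma sum_berWeight_mul_prod (g : Fin n → Bool → ℝ) :
    ∑ z, berWeight q z * ∏ i, g i (z i) = ∏ i, (q i * g i true + (1 - q i) * g i false) := by
  simp_rw [berWeight, ← prod_mul_distrib]
  rw [← Fintype.prod_sum fun i b => (if b then q i else 1 - q i) * g i b]
  simp

lemma sum_berWeight_mul_prod_finset (S : Finset (Fin n)) (g : Fin n → Bool → ℝ) :
    ∑ z, berWeight q z * ∏ i ∈ S, g i (z i) =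
      ∏ i ∈ S, (q i * g i true + (1 - q i) * g i false) := by
  convert sum_berWeight_mul_prod q (fun i b => if i ∈ S then g i b else 1) using 1
  · simp_rw [Fintype.prod_ite_mem]
  · rw [← Fintype.prod_ite_mem]
    exact prod_congr rfl fun i _ => by split_ifs <;> ring

lemma sum_berWeight : ∑ z, berWeight q z = 1 := by
  simpa using sum_berWeight_mul_prod_finset q ∅ fun _ _ => 1

lemma sum_berWeight_mul_centered_mul_centered (i j : Fin n) :
    ∑ z, berWeight q z * (((if z i then 1 else 0) - q i) * ((if z j then 1 else 0) - q j)) =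
      if i = j then q i * (1 - q i) else 0 := by
  split_ifs with hij
  · subst hij
    have := sum_berWeight_mul_prod_finset q {i}
      fun k b => ((if b then 1 else 0) - q k) * ((if b then 1 else 0) - q k)
    simp only [prod_singleton, if_true, Bool.false_eq_true, if_false] at this
    rw [this]
    ring
  · have := sum_berWeight_mul_prod_finset q {i, j} fun k b => (if b then 1 else 0) - q k
    simp only [prod_pair hij, if_true, Bool.false_eq_true, if_false] at this
    rw [this]
    ring

lemma count_sub_sum_eq (z : Fin n → Bool) :
    (count z : ℝ) - ∑ i, q i = ∑ i, ((if z i then 1 else 0) - q i) := by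
  simp [count, sum_sub_distrib]

lemma sum_berWeight_mul_sq_count_sub :
    ∑ z, berWeight q z * ((count z : ℝ) - ∑ i, q i) ^ 2 = ∑ i, q i * (1 - q i) := by
  simp_rw [count_sub_sum_eq, sq, sum_mul_sum, mul_sum]
  rw [sum_comm]
  refine sum_congr rfl fun i _ => ?_
  rw [sum_comm]
  simp_rw [sum_berWeight_mul_centered_mul_centered, sum_ite_eq, mem_univ, if_true]

lemma sum_berWeight_mul_sq_count_sub_le (hq : ∀ i, q i ∈ Set.Icc (0 : ℝ) 1) :
    ∑ z, berWeight q z * ((count z : ℝ) - ∑ i, q i) ^ 2 ≤ ∑ i, q i := by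
  rw [sum_berWeight_mul_sq_count_sub]
  exact sum_le_sum fun i _ => mul_le_of_le_one_right (hq i).1 (by linarith [(hq i).1])

lemma sub_Hber_eq_sum (c : ℝ) (ℓ : ℕ) :
    c - Hber q ℓ = ∑ z, berWeight q z * (c - min (count z : ℝ) ℓ) := by
  simp_rw [mul_sub, sum_sub_distrib, ← sum_mul, sum_berWeight, one_mul, Hber]

end Bernoulli

lemma min_sub_Hber_le_sqrt {n : ℕ} (q : Fin n → ℝ) (hq : ∀ i, q i ∈ Set.Icc (0 : ℝ) 1)
    (ℓ : ℕ) : min (∑ i, q i) ℓ - Hber q ℓ ≤ √(∑ i, q i) := by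
  rw [sub_Hber_eq_sum]
  calc ∑ z, berWeight q z * (min (∑ i, q i) ℓ - min (count z : ℝ) ℓ)
      ≤ ∑ z, berWeight q z * |(count z : ℝ) - ∑ i, q i| := by
        refine sum_le_sum fun z _ => mul_le_mul_of_nonneg_left ?_ (berWeight_nonneg q hq z)
        have := abs_min_sub_min_le_max (count z : ℝ) ℓ (∑ i, q i) ℓ
        rw [sub_self, abs_zero, max_eq_left (abs_nonneg _)] at this
        exact (le_abs_self _).trans ((abs_sub_comm _ _).trans_le this)
    _ ≤ √(∑ z, berWeight q z * |(count z : ℝ) - ∑ i, q i| ^ 2) :=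
        sum_mul_le_sqrt_sum_mul_sq _ (fun z _ => berWeight_nonneg q hq z) (sum_berWeight q) _
    _ ≤ √(∑ i, q i) := by
        simp_rw [sq_abs]
        exact Real.sqrt_le_sqrt (sum_berWeight_mul_sq_count_sub_le q hq)

/-- The pointwise Chebyshev bound behind `(λ - ℓ)² · E[(ℓ - X)⁺] ≤ ℓ · Var X`. -/
lemma sq_sub_mul_sub_min_le {x ℓ lam : ℝ} (hx : 0 ≤ x) (hℓ : 0 ≤ ℓ) (hℓlam : ℓ ≤ lam) :
    (lam - ℓ) ^ 2 * (ℓ - min x ℓ) ≤ ℓ * (x - lam) ^ 2 := by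
  rcases le_total x ℓ with hxℓ | hℓx
  · rw [min_eq_left hxℓ]
    have hsq : (lam - ℓ) ^ 2 ≤ (x - lam) ^ 2 := by nlinarith
    nlinarith [sq_nonneg (lam - ℓ)]
  · rw [min_eq_right hℓx, sub_self, mul_zero]
    positivity

lemma sq_sub_mul_sub_Hber_le {n : ℕ} (q : Fin n → ℝ) (hq : ∀ i, q i ∈ Set.Icc (0 : ℝ) 1)
    {ℓ : ℕ} (hℓ : (ℓ : ℝ) ≤ ∑ i, q i) :
    (∑ i, q i - ℓ) ^ 2 * (ℓ - Hber q ℓ) ≤ ℓ * ∑ i, q i := by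
  rw [sub_Hber_eq_sum, mul_sum]
  calc ∑ z, (∑ i, q i - ℓ) ^ 2 * (berWeight q z * (ℓ - min (count z : ℝ) ℓ))
      ≤ ∑ z, berWeight q z * (ℓ * ((count z : ℝ) - ∑ i, q i) ^ 2) := by
        refine sum_le_sum fun z _ => ?_
        rw [mul_left_comm]
        exact mul_le_mul_of_nonneg_left
          (sq_sub_mul_sub_min_le (Nat.cast_nonneg _) (Nat.cast_nonneg _) hℓ)
          (berWeight_nonneg q hq z)
    _ = ℓ * ∑ z, berWeight q z * ((count z : ℝ) - ∑ i, q i) ^ 2 := by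
        rw [mul_sum]
        exact sum_congr rfl fun z _ => by ring
    _ ≤ ℓ * ∑ i, q i :=
        mul_le_mul_of_nonneg_left (sum_berWeight_mul_sq_count_sub_le q hq) (Nat.cast_nonneg _)

lemma mul_sqrt_le_three_mul_sq_sub {lam ℓ : ℝ} (hlam : 1 ≤ lam) (hℓ : 0 ≤ ℓ)
    (hlarge : 3 * ℓ < lam) : lam * √lam ≤ 3 * (lam - ℓ) ^ 2 := by
  have hsqrt : √lam ≤ lam := (Real.sqrt_le_left (by linarith)).2 (by nlinarith)
  nlinarith

theorem hcher_sub_hber_sqrt_lam_general (n : ℕ) (q : Fin n → ℝ) (hq : ∀ i, q i ∈ Set.Icc (0 : ℝ) 1)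
    (lam : ℝ) (hlam : lam = ∑ i, q i) (hlam1 : 1 ≤ lam) (ℓ : ℕ) :
    min lam (ℓ : ℝ) - Hber q ℓ ≤ 3 / Real.sqrt lam * min lam (ℓ : ℝ) := by
  subst hlam
  set lam := ∑ i, q i
  have hsqrt : 0 < √lam := Real.sqrt_pos.2 (by linarith)
  rcases le_or_gt lam (3 * ℓ) with hsmall | hlarge
  · have hmin : lam ≤ 3 * min lam ℓ := by
      rw [mul_min_of_nonneg _ _ (by norm_num)]
      exact le_min (by linarith) hsmall
    calc min lam ℓ - Hber q ℓ ≤ √lam := min_sub_Hber_le_sqrt q hq ℓ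
      _ = lam / √lam := Real.div_sqrt.symm
      _ ≤ 3 * min lam ℓ / √lam := by gcongr
      _ = 3 / √lam * min lam ℓ := by ring
  · have hℓ0 : (0 : ℝ) ≤ ℓ := Nat.cast_nonneg ℓ
    have hℓ : (ℓ : ℝ) ≤ lam := by linarith
    have hgap := sq_sub_mul_sub_Hber_le q hq hℓ
    have harith := mul_le_mul_of_nonneg_left (mul_sqrt_le_three_mul_sq_sub hlam1 hℓ0 hlarge) hℓ0
    have hpos : 0 < (lam - ℓ) ^ 2 := by nlinarith
    rw [min_eq_right hℓ, div_mul_eq_mul_div, le_div_iff₀ hsqrt]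
    refine le_of_mul_le_mul_left ?_ hpos
    calc (lam - ℓ) ^ 2 * ((ℓ - Hber q ℓ) * √lam) ≤ ℓ * lam * √lam := by
          rw [← mul_assoc]; exact mul_le_mul_of_nonneg_right hgap hsqrt.le
      _ ≤ (lam - ℓ) ^ 2 * (3 * ℓ) := by linarith

/-- For independent `z_i ~ Ber(q_i)` with `λ = Σ q_i ≥ 1` and a positive integer `ℓ`,
`min(λ, ℓ) - E[min(Σ z_i, ℓ)] ≤ (3/√λ) · min(λ, ℓ)`. -/
theorem hcher_sub_hber_sqrt_lam (n : ℕ) (q : Fin n → ℝ) (hq : ∀ i, q i ∈ Set.Icc (0 : ℝ) 1)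
    (lam : ℝ) (hlam : lam = ∑ i, q i) (hlam1 : 1 ≤ lam) (ℓ : ℕ) (hℓ : 1 ≤ ℓ) :
    min lam (ℓ : ℝ) - Hber q ℓ ≤ 3 / Real.sqrt lam * min lam (ℓ : ℝ) :=
  hcher_sub_hber_sqrt_lam_general n q hq lam hlam hlam1 ℓ
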